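/- arXiv:2306.16790 — 3 statements merged into one kernel-verified Lean document; each statement's English description precedes it below -/
import Mathlib

section
/- For α ∈ ℝ and z > 0, the modified Bessel function of the second kind satisfies K_α(z) ~ √(π/(2z)) e^{−z} as z → ∞, i.e., the ratio K_α(z)/(√(π/(2z)) e^{−z}) tends to 1. -/
open Real MeasureTheory Filter

noncomputable def besselK (α : ℝ) (t : ℝ) : ℝ :=
  (1 / 2) * ∫ s in Set.Ioi (0 : ℝ), s ^ (α - 1) * Real.exp (-(t / 2) * (s + 1 / s))

open Topology

/-! Substituting `s = eˣ` gives `K_α(t) = ½ ∫ exp(αx − t cosh x) dx`, and rescaling `x = u/√t`,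
`2√t eᵗ K_α(t) = ∫ exp(αu/√t − t(cosh(u/√t) − 1)) du`. The integrand tends to `exp(−u²/2)`, and
since `cosh y − 1 ≥ y²/2` it is dominated by `exp(α² − u²/4)` for `t ≥ 1`, so by dominated
convergence the integral tends to `√(2π)`. -/

theorem integral_comp_exp {E : Type*} [NormedAddCommGroup E] [NormedSpace ℝ E]
    (g : ℝ → E) : ∫ x, exp x • g (exp x) = ∫ y in Set.Ioi 0, g y := by
  rw [← range_exp, ← Set.image_univ, integral_image_eq_integral_abs_deriv_smul MeasurableSet.univ
    (fun x _ ↦ (hasDerivAt_exp x).hasDerivWithinAt) exp_injective.injOn, setIntegral_univ]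
  simp only [abs_of_pos (exp_pos _)]

theorem besselK_eq_integral_exp_cosh (α t : ℝ) :
    besselK α t = (1 / 2) * ∫ x, exp (α * x - t * cosh x) := by
  rw [besselK, ← integral_comp_exp]
  congr 2 with x
  rw [smul_eq_mul, rpow_def_of_pos (exp_pos x), log_exp, one_div, ← exp_neg, cosh_eq,
    ← exp_add, ← exp_add]
  ring_nf

theorem cosh_sub_one_eq_two_mul_sinh_half_sq (x : ℝ) : cosh x - 1 = 2 * sinh (x / 2) ^ 2 := by
  have h := cosh_two_mul (x / 2)
  rw [mul_div_cancel₀ x two_ne_zero, cosh_sq] at h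
  linarith

theorem sq_div_two_le_cosh_sub_one (x : ℝ) : x ^ 2 / 2 ≤ cosh x - 1 := by
  have h : |x / 2| ≤ |sinh (x / 2)| := by
    rw [abs_sinh, self_le_sinh_iff]
    exact abs_nonneg _
  rw [cosh_sub_one_eq_two_mul_sinh_half_sq]
  linarith [sq_le_sq.mpr h]

theorem tendsto_cosh_sub_one_div_sq :
    Tendsto (fun x ↦ (cosh x - 1) / x ^ 2) (𝓝[≠] 0) (𝓝 (1 / 2)) := by
  have hsinh : Tendsto (fun y ↦ y⁻¹ * sinh y) (𝓝[≠] 0) (𝓝 1) := by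
    simpa using (hasDerivAt_sinh 0).tendsto_slope_zero
  have hhalf : Tendsto (fun x : ℝ ↦ x / 2) (𝓝[≠] 0) (𝓝[≠] 0) := by
    refine tendsto_nhdsWithin_of_tendsto_nhds_of_eventually_within _ ?_ ?_
    · simpa using (tendsto_id (x := 𝓝[≠] (0 : ℝ))).mono_right nhdsWithin_le_nhds |>.div_const 2
    · filter_upwards [self_mem_nhdsWithin] with x hx
      exact div_ne_zero hx two_ne_zero
  have := ((hsinh.comp hhalf).pow 2).const_mul (1 / 2)
  rw [one_pow, mul_one] at this
  refine this.congr' ?_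
  filter_upwards [self_mem_nhdsWithin] with x hx
  simp only [Function.comp_apply, cosh_sub_one_eq_two_mul_sinh_half_sq]
  field_simp

theorem tendsto_mul_cosh_div_sqrt_sub_one (u : ℝ) :
    Tendsto (fun t ↦ t * (cosh (u / √t) - 1)) atTop (𝓝 (u ^ 2 / 2)) := by
  rcases eq_or_ne u 0 with rfl | hu
  · simp
  have hy : Tendsto (fun t ↦ u / √t) atTop (𝓝[≠] 0) := by
    refine tendsto_nhdsWithin_of_tendsto_nhds_of_eventually_within _
      (tendsto_const_nhds.div_atTop tendsto_sqrt_atTop) ?_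
    filter_upwards [eventually_gt_atTop 0] with t ht
    exact div_ne_zero hu (sqrt_pos.mpr ht).ne'
  have := (tendsto_cosh_sub_one_div_sq.comp hy).const_mul (u ^ 2)
  rw [mul_one_div] at this
  refine this.congr' ?_
  filter_upwards [eventually_gt_atTop 0] with t ht
  simp only [Function.comp_apply, div_pow, sq_sqrt ht.le]
  field_simp

theorem mul_div_sqrt_sub_mul_cosh_sub_one_le (α : ℝ) {t : ℝ} (ht : 1 ≤ t) (u : ℝ) :
    α * u / √t - t * (cosh (u / √t) - 1) ≤ α ^ 2 - u ^ 2 / 4 := by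
  have hsqrt : 1 ≤ √t := one_le_sqrt.mpr ht
  have hquad : u ^ 2 / 2 ≤ t * (cosh (u / √t) - 1) := by
    have := mul_le_mul_of_nonneg_left (sq_div_two_le_cosh_sub_one (u / √t)) (by linarith : 0 ≤ t)
    rwa [div_pow, sq_sqrt (by linarith), mul_div_assoc', mul_div_cancel₀ _ (by linarith)] at this
  have hlin : α * u / √t ≤ |α| * |u| :=
    calc α * u / √t ≤ |α * u| / √t := by gcongr; exact le_abs_self _
      _ ≤ |α * u| := div_le_self (abs_nonneg _) hsqrt
      _ = |α| * |u| := abs_mul α u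
  nlinarith [sq_nonneg (|α| - |u| / 2), sq_abs α, sq_abs u]

theorem two_mul_sqrt_mul_exp_mul_besselK (α : ℝ) {t : ℝ} (ht : 0 < t) :
    2 * √t * exp t * besselK α t = ∫ u, exp (α * u / √t - t * (cosh (u / √t) - 1)) := by
  have hscale := Measure.integral_comp_div (fun x ↦ exp (α * x - t * cosh x)) √t
  rw [abs_of_pos (sqrt_pos.mpr ht), smul_eq_mul] at hscale
  calc 2 * √t * exp t * besselK α t
      = exp t * (√t * ∫ x, exp (α * x - t * cosh x)) := by
        rw [besselK_eq_integral_exp_cosh]; ring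
    _ = ∫ u, exp (α * u / √t - t * (cosh (u / √t) - 1)) := by
        rw [← hscale, ← integral_const_mul]
        congr 1 with u
        rw [← exp_add]
        ring_nf

theorem tendsto_integral_exp_mul_div_sqrt_sub_mul_cosh (α : ℝ) :
    Tendsto (fun t ↦ ∫ u, exp (α * u / √t - t * (cosh (u / √t) - 1))) atTop (𝓝 √(2 * π)) := by
  have hgauss : ∫ u : ℝ, exp (-(1 / 2) * u ^ 2) = √(2 * π) := by
    rw [integral_gaussian]
    congr 1
    ring
  rw [← hgauss]
  refine tendsto_integral_filter_of_dominated_convergence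
    (fun u ↦ exp (α ^ 2) * exp (-(1 / 4) * u ^ 2)) ?_ ?_ ?_ ?_
  · exact Eventually.of_forall fun t ↦ (by fun_prop : Continuous _).aestronglyMeasurable
  · filter_upwards [eventually_ge_atTop 1] with t ht
    refine ae_of_all _ fun u ↦ ?_
    rw [norm_of_nonneg (exp_pos _).le, ← exp_add, exp_le_exp]
    linarith [mul_div_sqrt_sub_mul_cosh_sub_one_le α ht u]
  · exact (integrable_exp_neg_mul_sq (by norm_num)).const_mul _
  · refine ae_of_all _ fun u ↦ ?_
    have hlin : Tendsto (fun t ↦ α * u / √t) atTop (𝓝 0) :=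
      tendsto_const_nhds.div_atTop tendsto_sqrt_atTop
    convert (hlin.sub (tendsto_mul_cosh_div_sqrt_sub_one u)).rexp using 3
    ring

/-- `K_α(z) ~ √(π/(2z)) e^{−z}` as `z → ∞`. -/
theorem besselK_asymptotic (α : ℝ) :
    Tendsto (fun z : ℝ => besselK α z / (Real.sqrt (π / (2 * z)) * Real.exp (-z)))
      atTop (nhds 1) := by
  have hlim := (tendsto_integral_exp_mul_div_sqrt_sub_mul_cosh α).div_const √(2 * π)
  rw [div_self (by positivity)] at hlim
  refine hlim.congr' ?_
  filter_upwards [eventually_gt_atTop 0] with z hz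
  have hsqrt : √(π / (2 * z)) = √(2 * π) / (2 * √z) := by
    rw [show π / (2 * z) = 2 * π / 2 ^ 2 / z by field_simp, sqrt_div' _ hz.le,
      sqrt_div' _ (by positivity), sqrt_sq two_pos.le]
    ring
  rw [← two_mul_sqrt_mul_exp_mul_besselK α hz, hsqrt, exp_neg]
  have hsqrt_pos : 0 < √z := sqrt_pos.mpr hz
  field_simp
end

section
/- For the standard Cauchy Lévy density g₀(y) = 1/(π y²), the identity ∫_ℝ (1 − cos(uy)) g₀(y) dy = |u| holds for every u ∈ ℝ; equivalently, exp(∫(cos(uy)−1) g₀(y) dy) = e^{−|u|}, the characteristic function of the standard Cauchy distribution. -/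
/-!
Since `t⁻² = ∫₀^∞ y e^{-ty} dy` and `∫₀^∞ (1 - cos t) e^{-yt} dt = 1/y - y/(1 + y²)`
(the real part of a complex exponential integral), Tonelli's theorem gives
`∫₀^∞ (1 - cos t) / t² dt = ∫₀^∞ dy / (1 + y²) = π / 2`.
Evenness and the substitution `t = u y` then turn this into `∫ (1 - cos (u y)) / y² dy = π |u|`.
-/

open Real MeasureTheory Set

/-- The Lévy density of the standard Cauchy distribution. -/
noncomputable def g0 (z : ℝ) : ℝ := 1 / (π * z ^ 2)

lemma exp_neg_mul_mul_cos_eq_re (a b t : ℝ) :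
    exp (-(a * t)) * cos (b * t) = (Complex.exp ((-a + b * Complex.I) * t)).re := by
  simp [Complex.exp_re]

lemma integrableOn_exp_neg_mul_mul_cos_Ioi {a : ℝ} (ha : 0 < a) (b : ℝ) :
    IntegrableOn (fun t => exp (-(a * t)) * cos (b * t)) (Ioi 0) := by
  simp_rw [exp_neg_mul_mul_cos_eq_re]
  exact (integrableOn_exp_mul_complex_Ioi (by simpa using ha) 0).re

lemma integral_exp_neg_mul_mul_cos_Ioi {a : ℝ} (ha : 0 < a) (b : ℝ) :
    ∫ t in Ioi 0, exp (-(a * t)) * cos (b * t) = a / (a ^ 2 + b ^ 2) := by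
  have hre : (-a + b * Complex.I).re < 0 := by simpa using ha
  have h := integral_re (𝕜 := ℂ) (integrableOn_exp_mul_complex_Ioi hre 0)
  simp only [RCLike.re_to_complex] at h
  simp_rw [exp_neg_mul_mul_cos_eq_re]
  rw [h, integral_exp_mul_complex_Ioi hre]
  simp [Complex.div_re, Complex.normSq_apply, sq]

lemma one_sub_cos_mul_exp_neg_mul_eq (a t : ℝ) :
    (1 - cos t) * exp (-(a * t)) =
      exp (-(a * t)) * cos (0 * t) - exp (-(a * t)) * cos (1 * t) := by
  simp only [zero_mul, cos_zero, one_mul]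
  ring

lemma integrableOn_one_sub_cos_mul_exp_neg_mul_Ioi {a : ℝ} (ha : 0 < a) :
    IntegrableOn (fun t => (1 - cos t) * exp (-(a * t))) (Ioi 0) := by
  simp_rw [one_sub_cos_mul_exp_neg_mul_eq]
  exact (integrableOn_exp_neg_mul_mul_cos_Ioi ha 0).sub
    (integrableOn_exp_neg_mul_mul_cos_Ioi ha 1)

lemma integral_one_sub_cos_mul_exp_neg_mul_Ioi {a : ℝ} (ha : 0 < a) :
    ∫ t in Ioi 0, (1 - cos t) * exp (-(a * t)) = (a * (1 + a ^ 2))⁻¹ := by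
  simp_rw [one_sub_cos_mul_exp_neg_mul_eq]
  rw [integral_sub (integrableOn_exp_neg_mul_mul_cos_Ioi ha 0)
      (integrableOn_exp_neg_mul_mul_cos_Ioi ha 1), integral_exp_neg_mul_mul_cos_Ioi ha,
    integral_exp_neg_mul_mul_cos_Ioi ha]
  field_simp
  ring

lemma integrableOn_mul_exp_neg_mul_Ioi {a : ℝ} (ha : 0 < a) :
    IntegrableOn (fun t => t * exp (-(a * t))) (Ioi 0) := by
  refine (integrableOn_rpow_mul_exp_neg_mul_rpow (s := 1) (p := 1) (by norm_num) one_pos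
    ha).congr_fun (fun t _ => ?_) measurableSet_Ioi
  simp

lemma integral_mul_exp_neg_mul_Ioi {a : ℝ} (ha : 0 < a) :
    ∫ t in Ioi 0, t * exp (-(a * t)) = (a ^ 2)⁻¹ := by
  have h := integral_rpow_mul_exp_neg_mul_Ioi (a := 2) two_pos ha
  norm_num at h
  exact h

lemma one_sub_cos_nonneg (t : ℝ) : 0 ≤ 1 - cos t := sub_nonneg.2 (cos_le_one t)

theorem integral_one_sub_cos_div_sq_Ioi : ∫ t in Ioi 0, (1 - cos t) / t ^ 2 = π / 2 := by
  let F : ℝ → ℝ → ℝ := fun t y => y * ((1 - cos t) * exp (-(y * t)))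
  have hF : ∀ t y, 0 < y → 0 ≤ F t y := fun t y hy =>
    mul_nonneg hy.le (mul_nonneg (one_sub_cos_nonneg t) (exp_pos _).le)
  have inner_y : ∀ t ∈ Ioi (0 : ℝ), ∫⁻ y in Ioi 0, ENNReal.ofReal (F t y) =
      ENNReal.ofReal ((1 - cos t) / t ^ 2) := fun t ht => by
    have hFt : ∀ y, F t y = (1 - cos t) * (y * exp (-(t * y))) := fun y => by
      simp only [F, mul_comm y t]; ring
    simp_rw [hFt]
    rw [← ofReal_integral_eq_lintegral_ofReal ((integrableOn_mul_exp_neg_mul_Ioi ht).const_mul _)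
      (ae_restrict_of_forall_mem measurableSet_Ioi fun y hy => (hFt y).symm.trans_ge (hF t y hy)),
      integral_const_mul, integral_mul_exp_neg_mul_Ioi ht, div_eq_mul_inv]
  have inner_t : ∀ y ∈ Ioi (0 : ℝ), ∫⁻ t in Ioi 0, ENNReal.ofReal (F t y) =
      ENNReal.ofReal (1 + y ^ 2)⁻¹ := fun y hy => by
    rw [← ofReal_integral_eq_lintegral_ofReal
      ((integrableOn_one_sub_cos_mul_exp_neg_mul_Ioi hy).const_mul _)
      (ae_of_all _ fun t => hF t y hy), integral_const_mul,
      integral_one_sub_cos_mul_exp_neg_mul_Ioi hy, mul_inv, ← mul_assoc, mul_inv_cancel₀ hy.ne',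
      one_mul]
  have hmeas : AEMeasurable (Function.uncurry fun t y => ENNReal.ofReal (F t y))
      ((volume.restrict (Ioi 0)).prod (volume.restrict (Ioi 0))) := by
    fun_prop
  have hlintegral : ∫⁻ t in Ioi 0, ENNReal.ofReal ((1 - cos t) / t ^ 2) =
      ENNReal.ofReal (π / 2) := calc
    _ = ∫⁻ t in Ioi 0, ∫⁻ y in Ioi 0, ENNReal.ofReal (F t y) :=
      (setLIntegral_congr_fun measurableSet_Ioi inner_y).symm
    _ = ∫⁻ y in Ioi 0, ∫⁻ t in Ioi 0, ENNReal.ofReal (F t y) :=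
      lintegral_lintegral_swap hmeas
    _ = ∫⁻ y in Ioi 0, ENNReal.ofReal (1 + y ^ 2)⁻¹ :=
      setLIntegral_congr_fun measurableSet_Ioi inner_t
    _ = ENNReal.ofReal (π / 2) := by
      rw [← ofReal_integral_eq_lintegral_ofReal integrable_inv_one_add_sq.integrableOn
        (ae_of_all _ fun y => by positivity), integral_Ioi_inv_one_add_sq, arctan_zero, sub_zero]
  rw [integral_eq_lintegral_of_nonneg_ae, hlintegral, ENNReal.toReal_ofReal (by positivity)]
  · exact ae_of_all _ fun t => div_nonneg (one_sub_cos_nonneg t) (sq_nonneg t)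
  · exact (by fun_prop : Measurable fun t : ℝ => (1 - cos t) / t ^ 2).aestronglyMeasurable

theorem integral_one_sub_cos_div_sq : ∫ t, (1 - cos t) / t ^ 2 = π := by
  have h := integral_comp_abs (f := fun t => (1 - cos t) / t ^ 2)
  simp only [cos_abs, sq_abs] at h
  rw [h, integral_one_sub_cos_div_sq_Ioi]
  ring

theorem integral_one_sub_cos_mul_div_sq (u : ℝ) :
    ∫ y, (1 - cos (u * y)) / y ^ 2 = π * |u| := by
  -- Valid also for `u = 0` or `y = 0`, where both sides are `0` since `x / 0 = 0`.
  have hscale : ∀ y, (1 - cos (u * y)) / y ^ 2 = u ^ 2 * ((1 - cos (u * y)) / (u * y) ^ 2) := by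
    intro y
    rcases eq_or_ne u 0 with rfl | hu
    · simp
    rcases eq_or_ne y 0 with rfl | hy
    · simp
    field_simp
  simp_rw [hscale]
  rw [integral_const_mul, Measure.integral_comp_mul_left (fun t => (1 - cos t) / t ^ 2),
    integral_one_sub_cos_div_sq, smul_eq_mul, abs_inv, ← sq_abs, sq, ← mul_assoc,
    mul_self_mul_inv, mul_comm]

/-- `∫ (1 − cos(uy)) g₀(y) dy = |u|` for every `u ∈ ℝ`. -/
theorem integral_one_sub_cos_g0 (u : ℝ) :
    ∫ y : ℝ, (1 - Real.cos (u * y)) * g0 y = |u| := by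
  have hg0 : ∀ y, (1 - cos (u * y)) * g0 y = π⁻¹ * ((1 - cos (u * y)) / y ^ 2) := by
    intro y
    rw [g0, one_div, mul_inv, div_eq_mul_inv]
    ring
  simp_rw [hg0]
  rw [integral_const_mul, integral_one_sub_cos_mul_div_sq, inv_mul_cancel_left₀ pi_ne_zero]
end

section
/- Let x·ξ_s(x) with ξ_s(x) = 1 − K_{s−1}(x)/K_s(x), where K_α is the modified Bessel function of the second kind and s > 0. Then sup_{x>0} |x·ξ_s(x)| < ∞. Consequently, for h, u > 0, |1 − K_{s−1}(u/h)/K_s(u/h)| ≤ C h/u for a constant C depending only on s. -/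
open Real MeasureTheory

/-!
With `E(t) = exp (-(x/2) (t + 1/t))`, the derivative of `t ^ s / (t + 1) * E(t)` is
`t ^ (s-1) E(t)` times the bounded weight `((s-1) t + s) / (t + 1)²`, minus
`(x/2) (t ^ (s-1) - t ^ (s-2)) E(t)`, whose integral over `(0, ∞)` is `x (K_s - K_{s-1})`.
The boundary terms vanish for `s > 0`, so `|x (K_s(x) - K_{s-1}(x))| ≤ 2 (|s-1| + s) K_s(x)`;
divide by `K_s(x) > 0`.
-/

open Set Filter Topology Nat

noncomputable def besselKIntegrand (α c t : ℝ) : ℝ := t ^ α * exp (-c * (t + 1 / t))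

lemma besselK_eq_integral (α x : ℝ) :
    besselK α x = 1 / 2 * ∫ t in Ioi 0, besselKIntegrand (α - 1) (x / 2) t := rfl

lemma besselKIntegrand_pos (α c : ℝ) {t : ℝ} (ht : 0 < t) : 0 < besselKIntegrand α c t := by
  unfold besselKIntegrand; positivity

lemma besselKIntegrand_zero {α : ℝ} (hα : α ≠ 0) (c : ℝ) : besselKIntegrand α c 0 = 0 := by
  rw [besselKIntegrand, zero_rpow hα, zero_mul]

lemma besselKIntegrand_inv (α c : ℝ) {t : ℝ} (ht : 0 < t) :
    besselKIntegrand α c t⁻¹ = besselKIntegrand (-α) c t := by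
  rw [besselKIntegrand, besselKIntegrand, inv_rpow ht.le, ← rpow_neg ht.le, one_div t⁻¹, inv_inv,
    add_comm, one_div]

lemma pow_mul_exp_neg_mul_le (n : ℕ) {c y : ℝ} (hc : 0 < c) (hy : 0 ≤ y) :
    y ^ n * exp (-(c * y)) ≤ n ! / c ^ n := by
  have h := pow_div_factorial_le_exp (c * y) (by positivity) n
  rw [div_le_iff₀ (by positivity)] at h
  rw [le_div_iff₀ (by positivity)]
  calc y ^ n * exp (-(c * y)) * c ^ n = (c * y) ^ n * exp (-(c * y)) := by ring
    _ ≤ exp (c * y) * n ! * exp (-(c * y)) := by gcongr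
    _ = n ! := by rw [mul_comm (exp _), mul_assoc, ← exp_add]; simp

lemma besselKIntegrand_le_of_one_le {α c t : ℝ} {n : ℕ} (hn : |α| ≤ n) (hc : 0 < c)
    (ht : 1 ≤ t) : besselKIntegrand α c t ≤ n ! / c ^ n := by
  have ht' : 0 < 1 / t := by positivity
  have hexp : exp (-c * (t + 1 / t)) ≤ exp (-(c * t)) := exp_le_exp.2 (by nlinarith)
  calc besselKIntegrand α c t ≤ t ^ (n : ℝ) * exp (-(c * t)) :=
        mul_le_mul (rpow_le_rpow_of_exponent_le ht ((le_abs_self α).trans hn)) hexp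
          (exp_pos _).le (by positivity)
    _ ≤ n ! / c ^ n := by
        rw [rpow_natCast]; exact pow_mul_exp_neg_mul_le n hc (by linarith)

lemma besselKIntegrand_le {α c t : ℝ} {n : ℕ} (hn : |α| ≤ n) (hc : 0 < c) (ht : 0 < t) :
    besselKIntegrand α c t ≤ n ! / c ^ n := by
  rcases le_total 1 t with h1 | h1
  · exact besselKIntegrand_le_of_one_le hn hc h1
  · rw [← inv_inv t, besselKIntegrand_inv α c (inv_pos.2 ht)]
    exact besselKIntegrand_le_of_one_le (by rwa [abs_neg]) hc (one_le_inv₀ ht |>.2 h1)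

lemma besselKIntegrand_le_mul_exp (α : ℝ) {c : ℝ} (hc : 0 < c) :
    ∃ B, ∀ t, 0 < t → besselKIntegrand α c t ≤ B * exp (-(c / 2) * t) := by
  obtain ⟨n, hn⟩ := exists_nat_ge |α|
  refine ⟨n ! / (c / 2) ^ n, fun t ht => ?_⟩
  have hsplit : besselKIntegrand α c t =
      besselKIntegrand α (c / 2) t * exp (-(c / 2) * (t + 1 / t)) := by
    rw [besselKIntegrand, besselKIntegrand, mul_assoc, ← exp_add]; ring_nf
  have ht' : 0 < 1 / t := by positivity
  have hexp : exp (-(c / 2) * (t + 1 / t)) ≤ exp (-(c / 2) * t) := exp_le_exp.2 (by nlinarith)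
  rw [hsplit]
  gcongr
  exact besselKIntegrand_le hn (half_pos hc) ht

lemma continuousOn_besselKIntegrand (α c : ℝ) :
    ContinuousOn (besselKIntegrand α c) (Ioi 0) := by
  intro t ht
  have ht' : t ≠ 0 := ne_of_gt ht
  exact ((continuousAt_rpow_const t α (Or.inl ht')).mul
    (by fun_prop (disch := exact ht'))).continuousWithinAt

lemma integrableOn_besselKIntegrand (α : ℝ) {c : ℝ} (hc : 0 < c) :
    IntegrableOn (besselKIntegrand α c) (Ioi 0) := by
  obtain ⟨B, hB⟩ := besselKIntegrand_le_mul_exp α hc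
  refine Integrable.mono' ((exp_neg_integrableOn_Ioi 0 (half_pos hc)).const_mul B)
    ((continuousOn_besselKIntegrand α c).aestronglyMeasurable measurableSet_Ioi) ?_
  filter_upwards [ae_restrict_mem measurableSet_Ioi] with t ht
  rw [norm_of_nonneg (besselKIntegrand_pos α c ht).le]
  exact hB t ht

lemma besselK_pos (α : ℝ) {x : ℝ} (hx : 0 < x) : 0 < besselK α x := by
  rw [besselK_eq_integral]
  refine mul_pos one_half_pos ((setIntegral_pos_iff_support_of_nonneg_ae ?_
    (integrableOn_besselKIntegrand (α - 1) (half_pos hx))).2 ?_)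
  · filter_upwards [ae_restrict_mem measurableSet_Ioi] with t ht
    exact (besselKIntegrand_pos _ _ ht).le
  · have hsupp : Function.support (besselKIntegrand (α - 1) (x / 2)) ∩ Ioi 0 = Ioi 0 :=
      inter_eq_right.2 fun t ht => (besselKIntegrand_pos _ _ ht).ne'
    rw [hsupp, volume_Ioi]
    exact ENNReal.zero_lt_top

/-- `t ^ (s - 1) * besselKWeight s t` is the derivative of `t ^ s / (t + 1)`. -/
noncomputable def besselKWeight (s t : ℝ) : ℝ := ((s - 1) * t + s) / (t + 1) ^ 2

lemma continuousOn_besselKWeight (s : ℝ) : ContinuousOn (besselKWeight s) (Ioi 0) := by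
  intro t (ht : 0 < t)
  have ht' : (t + 1) ^ 2 ≠ 0 := by positivity
  exact ContinuousAt.continuousWithinAt (by unfold besselKWeight; fun_prop (disch := exact ht'))

lemma abs_besselKWeight_le {s t : ℝ} (hs : 0 ≤ s) (ht : 0 ≤ t) :
    |besselKWeight s t| ≤ |s - 1| + s := by
  rw [besselKWeight, abs_div, abs_of_pos (by positivity : (0 : ℝ) < (t + 1) ^ 2),
    div_le_iff₀ (by positivity)]
  calc |(s - 1) * t + s| ≤ |s - 1| * t + s := by
        simpa [abs_mul, abs_of_nonneg ht, abs_of_nonneg hs] using abs_add_le ((s - 1) * t) s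
    _ ≤ (|s - 1| + s) * (t + 1) ^ 2 := by
        nlinarith [mul_nonneg (abs_nonneg (s - 1)) (by positivity : 0 ≤ t ^ 2 + t + 1),
          mul_nonneg hs (by positivity : 0 ≤ t ^ 2 + 2 * t)]

lemma integrableOn_besselKIntegrand_mul_besselKWeight {s c : ℝ} (hs : 0 ≤ s) (hc : 0 < c) :
    IntegrableOn (fun t => besselKIntegrand (s - 1) c t * besselKWeight s t) (Ioi 0) := by
  refine (integrableOn_besselKIntegrand (s - 1) hc).mul_bdd (c := |s - 1| + s) ?_ ?_
  · exact (continuousOn_besselKWeight s).aestronglyMeasurable measurableSet_Ioi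
  · filter_upwards [ae_restrict_mem measurableSet_Ioi] with t ht
    exact abs_besselKWeight_le hs (le_of_lt ht)

lemma hasDerivAt_besselKIntegrand_div (s c : ℝ) {t : ℝ} (ht : 0 < t) :
    HasDerivAt (fun t => besselKIntegrand s c t / (t + 1))
      (besselKIntegrand (s - 1) c t * besselKWeight s t
        - c * (besselKIntegrand (s - 1) c t - besselKIntegrand (s - 2) c t)) t := by
  have hpow : HasDerivAt (fun t : ℝ => t ^ s) (s * t ^ (s - 1)) t :=
    hasDerivAt_rpow_const (Or.inl ht.ne')
  have hinv : HasDerivAt (fun t : ℝ => 1 / t) (-(t ^ 2)⁻¹) t := by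
    simpa only [one_div] using hasDerivAt_inv ht.ne'
  have hexp := (((hasDerivAt_id' t).add hinv).const_mul (-c)).exp
  refine ((hpow.mul hexp).div ((hasDerivAt_id t).add_const 1) (by positivity)).congr_deriv ?_
  have e1 : t ^ s = t ^ (s - 2) * t ^ 2 := by
    rw [← rpow_natCast, ← rpow_add ht]; norm_num
  have e2 : t ^ (s - 1) = t ^ (s - 2) * t := by
    rw [← rpow_add_one ht.ne']; ring_nf
  simp only [besselKIntegrand, besselKWeight, e1, e2, Pi.add_apply, Pi.mul_apply, id]
  field_simp
  ring

lemma tendsto_besselKIntegrand_div_atTop (s : ℝ) {c : ℝ} (hc : 0 < c) :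
    Tendsto (fun t => besselKIntegrand s c t / (t + 1)) atTop (𝓝 0) := by
  obtain ⟨n, hn⟩ := exists_nat_ge |s|
  refine squeeze_zero' ?_ ?_ (tendsto_const_nhds (x := (n ! / c ^ n : ℝ)).div_atTop
    (tendsto_atTop_add_const_right _ 1 tendsto_id))
  · filter_upwards [eventually_gt_atTop 0] with t ht
    have := besselKIntegrand_pos s c ht
    positivity
  · filter_upwards [eventually_gt_atTop 0] with t ht
    exact div_le_div_of_nonneg_right (besselKIntegrand_le hn hc ht) (by positivity)

lemma continuousWithinAt_besselKIntegrand_div_zero {s c : ℝ} (hs : 0 < s) (hc : 0 ≤ c) :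
    ContinuousWithinAt (fun t => besselKIntegrand s c t / (t + 1)) (Ici 0) 0 := by
  rw [ContinuousWithinAt, besselKIntegrand_zero hs.ne', zero_div]
  have hpow : Tendsto (fun t : ℝ => t ^ s) (𝓝[Ici 0] 0) (𝓝 0) := by
    simpa [zero_rpow hs.ne'] using
      (continuousAt_rpow_const 0 s (Or.inr hs.le)).tendsto.mono_left nhdsWithin_le_nhds
  refine squeeze_zero' ?_ ?_ hpow
  · filter_upwards [self_mem_nhdsWithin] with t (ht : 0 ≤ t)
    unfold besselKIntegrand
    positivity
  · filter_upwards [self_mem_nhdsWithin] with t (ht : 0 ≤ t)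
    have hexp : exp (-c * (t + 1 / t)) ≤ 1 := exp_le_one_iff.2 (by
      have : 0 ≤ t + 1 / t := by positivity
      nlinarith)
    calc besselKIntegrand s c t / (t + 1) ≤ besselKIntegrand s c t :=
          div_le_self (by unfold besselKIntegrand; positivity) (by linarith)
      _ ≤ t ^ s * 1 := by unfold besselKIntegrand; gcongr
      _ = t ^ s := mul_one _

lemma integral_besselKIntegrand_mul_besselKWeight {s c : ℝ} (hs : 0 < s) (hc : 0 < c) :
    ∫ t in Ioi 0, besselKIntegrand (s - 1) c t * besselKWeight s t =
      c * ((∫ t in Ioi 0, besselKIntegrand (s - 1) c t) -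
        ∫ t in Ioi 0, besselKIntegrand (s - 2) c t) := by
  have hI1 := integrableOn_besselKIntegrand (s - 1) hc
  have hI2 := integrableOn_besselKIntegrand (s - 2) hc
  have hIw := integrableOn_besselKIntegrand_mul_besselKWeight hs.le hc
  have hI12 : IntegrableOn
      (fun t => besselKIntegrand (s - 1) c t - besselKIntegrand (s - 2) c t) (Ioi 0) :=
    hI1.sub hI2
  have hFTC := integral_Ioi_of_hasDerivAt_of_tendsto
    (continuousWithinAt_besselKIntegrand_div_zero hs hc.le)
    (fun t ht => hasDerivAt_besselKIntegrand_div s c ht) (hIw.sub (hI12.const_mul c))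
    (tendsto_besselKIntegrand_div_atTop s hc)
  rw [integral_sub hIw (hI12.const_mul c), integral_const_mul, integral_sub hI1 hI2,
    besselKIntegrand_zero hs.ne', zero_div, sub_zero] at hFTC
  linarith

lemma mul_sub_besselK_eq_integral {s x : ℝ} (hs : 0 < s) (hx : 0 < x) :
    x * (besselK s x - besselK (s - 1) x) =
      ∫ t in Ioi 0, besselKIntegrand (s - 1) (x / 2) t * besselKWeight s t := by
  rw [integral_besselKIntegrand_mul_besselKWeight hs (half_pos hx), besselK_eq_integral,
    besselK_eq_integral, sub_sub, one_add_one_eq_two]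
  ring

lemma abs_mul_sub_besselK_le {s x : ℝ} (hs : 0 < s) (hx : 0 < x) :
    |x * (besselK s x - besselK (s - 1) x)| ≤ 2 * (|s - 1| + s) * besselK s x := by
  have hI := integrableOn_besselKIntegrand (s - 1) (half_pos hx)
  have hIw := integrableOn_besselKIntegrand_mul_besselKWeight hs.le (half_pos hx)
  rw [mul_sub_besselK_eq_integral hs hx, besselK_eq_integral]
  calc |∫ t in Ioi 0, besselKIntegrand (s - 1) (x / 2) t * besselKWeight s t|
      ≤ ∫ t in Ioi 0, besselKIntegrand (s - 1) (x / 2) t * (|s - 1| + s) := by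
        refine abs_integral_le_integral_abs.trans
          (setIntegral_mono_on hIw.abs (hI.mul_const _) measurableSet_Ioi fun t ht => ?_)
        rw [abs_mul, abs_of_pos (besselKIntegrand_pos _ _ ht)]
        exact mul_le_mul_of_nonneg_left (abs_besselKWeight_le hs.le (le_of_lt ht))
          (besselKIntegrand_pos _ _ ht).le
    _ = 2 * (|s - 1| + s) * (1 / 2 * ∫ t in Ioi 0, besselKIntegrand (s - 1) (x / 2) t) := by
        rw [integral_mul_const]; ring

lemma abs_mul_one_sub_besselK_div_le {s x : ℝ} (hs : 0 < s) (hx : 0 < x) :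
    |x * (1 - besselK (s - 1) x / besselK s x)| ≤ 2 * (|s - 1| + s) := by
  have hK := besselK_pos s hx
  have hratio : x * (1 - besselK (s - 1) x / besselK s x) =
      x * (besselK s x - besselK (s - 1) x) / besselK s x := by
    field_simp
  rw [hratio, abs_div, abs_of_pos hK, div_le_iff₀ hK]
  exact abs_mul_sub_besselK_le hs hx

/-- `sup_{x>0} |x (1 − K_{s−1}(x)/K_s(x))| < ∞`; consequently
`|1 − K_{s−1}(u/h)/K_s(u/h)| ≤ C h/u` for `h, u > 0`. -/
theorem besselK_ratio_bound {s : ℝ} (hs : 0 < s) :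
    ∃ C : ℝ, (∀ x : ℝ, 0 < x → |x * (1 - besselK (s - 1) x / besselK s x)| ≤ C) ∧
      ∀ h u : ℝ, 0 < h → 0 < u →
        |1 - besselK (s - 1) (u / h) / besselK s (u / h)| ≤ C * h / u := by
  refine ⟨_, fun x hx => abs_mul_one_sub_besselK_div_le hs hx, fun h u hh hu => ?_⟩
  have hx : 0 < u / h := div_pos hu hh
  have hux := abs_mul_one_sub_besselK_div_le hs hx
  rw [abs_mul, abs_of_pos hx, ← le_div_iff₀' hx, div_div_eq_mul_div] at hux
  exact hux
end
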